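/- Let Φ denote the standard normal CDF and φ the standard normal density. For every x ∈ ℝ, the function h(t) = Φ(t·x/√(2−t²)) is twice differentiable on (−√2, √2) with second derivative h''(t) = −(2·t·x/(2−t²)^{7/2}) · (2x² − 3(2−t²)) · φ(t·x/√(2−t²)). -/

import Mathlib

open MeasureTheory Filter Set

/-- The standard normal density. -/
noncomputable def stdPdf (t : ℝ) : ℝ := Real.exp (-(t ^ 2) / 2) / Real.sqrt (2 * Real.pi)

/-- The standard normal cumulative distribution function. -/
noncomputable def stdCdf (x : ℝ) : ℝ := ∫ t in Set.Iic x, stdPdf t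

open Topology

/-!
Writing `g(s) = s·x/√(a - s²)`, a direct computation gives `g'(s) = a·x/√(a - s²)³`, so by
the fundamental theorem of calculus `h' = g'·φ(g)`. Differentiating once more with
`φ'(y) = -y·φ(y)` and collecting powers of `√(a - s²)` yields the formula; the theorem is the
case `a = 2`.
-/

lemma integrable_stdPdf : Integrable stdPdf := by
  convert (integrable_exp_neg_mul_sq (b := 1 / 2) (by norm_num)).div_const
    (Real.sqrt (2 * Real.pi)) using 2
  unfold stdPdf
  ring_nf

lemma continuous_stdPdf : Continuous stdPdf := by
  unfold stdPdf
  fun_prop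

lemma hasDerivAt_stdCdf (y : ℝ) : HasDerivAt stdCdf (stdPdf y) y := by
  have hcdf : stdCdf = fun u => stdCdf 0 + ∫ s in (0 : ℝ)..u, stdPdf s := by
    funext u
    rw [← intervalIntegral.integral_Iic_sub_Iic integrable_stdPdf.integrableOn
      integrable_stdPdf.integrableOn]
    unfold stdCdf
    ring
  rw [hcdf]
  exact (intervalIntegral.integral_hasDerivAt_right integrable_stdPdf.intervalIntegrable
    continuous_stdPdf.stronglyMeasurable.stronglyMeasurableAtFilter
    continuous_stdPdf.continuousAt).const_add _

lemma hasDerivAt_stdPdf (y : ℝ) : HasDerivAt stdPdf (-y * stdPdf y) y := by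
  have hexponent : HasDerivAt (fun s : ℝ => -(s ^ 2) / 2) (-y) y := by
    simpa using ((hasDerivAt_pow 2 y).neg.div_const 2).congr_deriv (by ring)
  refine (((Real.hasDerivAt_exp _).comp y hexponent).div_const _).congr_deriv ?_
  unfold stdPdf
  ring

section SqrtSubSq

variable {a s : ℝ}

lemma hasDerivAt_sqrt_sub_sq (hs : 0 < a - s ^ 2) :
    HasDerivAt (fun u : ℝ => √(a - u ^ 2)) (-s / √(a - s ^ 2)) s := by
  have hinner : HasDerivAt (fun u : ℝ => a - u ^ 2) (-(2 * s)) s := by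
    simpa using ((hasDerivAt_pow 2 s).const_sub a).congr_deriv (by ring)
  refine (hinner.sqrt hs.ne').congr_deriv ?_
  field_simp

lemma hasDerivAt_mul_div_sqrt_sub_sq (x : ℝ) (hs : 0 < a - s ^ 2) :
    HasDerivAt (fun u : ℝ => u * x / √(a - u ^ 2)) (a * x / √(a - s ^ 2) ^ 3) s := by
  have hr : √(a - s ^ 2) ^ 2 = a - s ^ 2 := Real.sq_sqrt hs.le
  have hr0 : √(a - s ^ 2) ≠ 0 := by positivity
  refine (((hasDerivAt_id' s).mul_const x).fun_div (hasDerivAt_sqrt_sub_sq hs) hr0).congr_deriv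
    ?_
  field_simp
  linear_combination x * hr

lemma hasDerivAt_stdCdf_mul_div_sqrt_sub_sq (x : ℝ) (hs : 0 < a - s ^ 2) :
    HasDerivAt (fun u : ℝ => stdCdf (u * x / √(a - u ^ 2)))
      (a * x / √(a - s ^ 2) ^ 3 * stdPdf (s * x / √(a - s ^ 2))) s :=
  ((hasDerivAt_stdCdf _).comp s (hasDerivAt_mul_div_sqrt_sub_sq x hs)).congr_deriv (mul_comm _ _)

lemma deriv_stdCdf_mul_div_sqrt_sub_sq_eventuallyEq (x : ℝ) (hs : 0 < a - s ^ 2) :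
    deriv (fun u : ℝ => stdCdf (u * x / √(a - u ^ 2))) =ᶠ[𝓝 s]
      fun u => a * x / √(a - u ^ 2) ^ 3 * stdPdf (u * x / √(a - u ^ 2)) := by
  have hopen : IsOpen {u : ℝ | 0 < a - u ^ 2} := isOpen_lt continuous_const (by fun_prop)
  filter_upwards [hopen.mem_nhds hs] with u hu
  exact (hasDerivAt_stdCdf_mul_div_sqrt_sub_sq x hu).deriv

lemma hasDerivAt_deriv_stdCdf_mul_div_sqrt_sub_sq (x : ℝ) (hs : 0 < a - s ^ 2) :
    HasDerivAt (deriv fun u : ℝ => stdCdf (u * x / √(a - u ^ 2)))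
      (-(a * s * x / √(a - s ^ 2) ^ 7) * (a * x ^ 2 - 3 * (a - s ^ 2)) *
        stdPdf (s * x / √(a - s ^ 2))) s := by
  have hr : √(a - s ^ 2) ^ 2 = a - s ^ 2 := Real.sq_sqrt hs.le
  have hr0 : √(a - s ^ 2) ≠ 0 := by positivity
  have hcoeff : HasDerivAt (fun u : ℝ => a * x / √(a - u ^ 2) ^ 3)
      ((0 * √(a - s ^ 2) ^ 3 - a * x * (3 * √(a - s ^ 2) ^ 2 * (-s / √(a - s ^ 2)))) /
        (√(a - s ^ 2) ^ 3) ^ 2) s := by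
    simpa using (hasDerivAt_const s (a * x)).fun_div ((hasDerivAt_sqrt_sub_sq hs).fun_pow 3)
      (pow_ne_zero 3 hr0)
  have hpdf : HasDerivAt (fun u : ℝ => stdPdf (u * x / √(a - u ^ 2)))
      (-(s * x / √(a - s ^ 2)) * stdPdf (s * x / √(a - s ^ 2)) *
        (a * x / √(a - s ^ 2) ^ 3)) s :=
    (hasDerivAt_stdPdf _).comp s (hasDerivAt_mul_div_sqrt_sub_sq x hs)
  refine ((hcoeff.mul hpdf).congr_deriv ?_).congr_of_eventuallyEq
    (deriv_stdCdf_mul_div_sqrt_sub_sq_eventuallyEq x hs)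
  field_simp
  linear_combination (3 * a * s * x * stdPdf (s * x / √(a - s ^ 2))) * hr

end SqrtSubSq

/-- The second-derivative formula from the proof of Lemma 1:
`h(t) = Φ(t·x/√(2-t²))` is twice differentiable on `(-√2, √2)` with
`h''(t) = -(2tx/(2-t²)^{7/2})(2x² - 3(2-t²)) φ(t·x/√(2-t²))`. -/
theorem stmt7 (x t : ℝ) (ht : t ∈ Set.Ioo (-Real.sqrt 2) (Real.sqrt 2)) :
    DifferentiableAt ℝ (fun s : ℝ => stdCdf (s * x / Real.sqrt (2 - s ^ 2))) t ∧
    HasDerivAt (deriv (fun s : ℝ => stdCdf (s * x / Real.sqrt (2 - s ^ 2))))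
      (-(2 * t * x / (2 - t ^ 2) ^ ((7:ℝ)/2)) * (2 * x ^ 2 - 3 * (2 - t ^ 2)) *
        stdPdf (t * x / Real.sqrt (2 - t ^ 2))) t := by
  have ht2 : 0 < 2 - t ^ 2 := by
    have := sq_lt_sq' ht.1 ht.2
    rw [Real.sq_sqrt zero_le_two] at this
    linarith
  have h72 : (2 - t ^ 2) ^ ((7 : ℝ) / 2) = √(2 - t ^ 2) ^ 7 := by
    rw [Real.rpow_div_two_eq_sqrt _ ht2.le]
    exact_mod_cast Real.rpow_natCast _ 7
  rw [h72]
  exact ⟨(hasDerivAt_stdCdf_mul_div_sqrt_sub_sq x ht2).differentiableAt,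
    hasDerivAt_deriv_stdCdf_mul_div_sqrt_sub_sq x ht2⟩
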